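/- arXiv:1506.02081 — 2 statements merged into one kernel-verified Lean document; each statement's English description precedes it below -/
import Mathlib

section
/- Suppose the stepsize equals γ* = (4/25)·μ / (K·L·(μ + L)). Then for every k ≥ 0 the IAG iterates satisfy ‖x^k − x*‖ ≤ (1 − c_K/(Q + 1)²)^k · ‖x^0 − x*‖, where c_K = (2/25) / (K·(2K + 1)) and Q = L/μ. -/
/-!
By strong monotonicity of `∇F` and `γ L² ≤ (4/25) μ`, the exact gradient step `y ↦ y - γ ∇F y`
contracts the distance to `x*` by `p = 1 - (23/25) γ μ`. The IAG step differs from it by `γ e^k`;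
since each stale gradient was sampled at most `K` steps ago and each step has length
`γ ‖g^j‖ ≤ γ L max_{j-K ≤ l ≤ j} ‖x^l - x*‖`, one gets
`‖x^{k+1} - x*‖ ≤ p ‖x^k - x*‖ + γ² K L² max_{k-2K ≤ l ≤ k} ‖x^l - x*‖`.
A sequence obeying such a delayed recurrence with window `d` decays like `ρ^k` as soon as
`q ≤ (ρ - p) ρ^d`, and for `γ*` this holds with `ρ = 1 - c_K/(Q+1)²`: all constants are multiples
of `s = 1/(K(Q+1)²)`, and Bernoulli's inequality gives `ρ^(2K) ≥ 74/75`.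
-/

open Finset InnerProductSpace

theorem ConvexOn.fderiv_apply_sub_le_fderiv_apply_sub {E : Type*} [NormedAddCommGroup E]
    [NormedSpace ℝ E] {φ : E → ℝ} (hφ : ConvexOn ℝ Set.univ φ) (hd : Differentiable ℝ φ)
    (a b : E) : fderiv ℝ φ b (a - b) ≤ fderiv ℝ φ a (a - b) := by
  set ℓ : ℝ →ᵃ[ℝ] E := AffineMap.lineMap b a
  have hderiv : ∀ t, HasDerivAt (φ ∘ ℓ) (fderiv ℝ φ (ℓ t) (a - b)) t := fun t =>
    (hd (ℓ t)).hasFDerivAt.comp_hasDerivAt t AffineMap.hasDerivAt_lineMap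
  have hmono := (hφ.comp_affineMap ℓ).monotoneOn_deriv fun t _ => (hderiv t).differentiableAt
  simpa [(hderiv _).deriv, ℓ] using hmono trivial trivial zero_le_one

section InnerProductSpace

variable {E : Type*} [NormedAddCommGroup E] [InnerProductSpace ℝ E]

theorem norm_sub_smul_le_of_inner_ge {d v : E} {γ μ L : ℝ} (hγ : 0 ≤ γ)
    (hinner : μ * ‖d‖ ^ 2 ≤ ⟪v, d⟫_ℝ) (hv : ‖v‖ ≤ L * ‖d‖) (hγL : γ * L ^ 2 ≤ 4 / 25 * μ)
    (hγμ : 23 / 25 * (γ * μ) ≤ 1) :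
    ‖d - γ • v‖ ≤ (1 - 23 / 25 * (γ * μ)) * ‖d‖ := by
  have hv2 : ‖v‖ ^ 2 ≤ L ^ 2 * ‖d‖ ^ 2 := by
    rw [← mul_pow]; exact pow_le_pow_left₀ (norm_nonneg v) hv 2
  have hsq : ‖d - γ • v‖ ^ 2 ≤ ((1 - 23 / 25 * (γ * μ)) * ‖d‖) ^ 2 := by
    rw [norm_sub_sq_real, real_inner_smul_right, real_inner_comm, norm_smul,
      Real.norm_of_nonneg hγ]
    -- `1 - 2γμ + γ²L² ≤ 1 - (46/25) γμ ≤ (1 - (23/25) γμ)²`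
    nlinarith [mul_le_mul_of_nonneg_left hinner hγ,
      mul_le_mul_of_nonneg_left hv2 (sq_nonneg γ),
      mul_le_mul_of_nonneg_right hγL (mul_nonneg hγ (sq_nonneg ‖d‖)), sq_nonneg (γ * μ * ‖d‖)]
  exact (pow_le_pow_iff_left₀ (norm_nonneg _) (by nlinarith [norm_nonneg d]) two_ne_zero).mp
    hsq

theorem gradient_fun_sum [CompleteSpace E] {ι : Type*} {s : Finset ι} {f : ι → E → ℝ}
    {y : E} (hf : ∀ i ∈ s, DifferentiableAt ℝ (f i) y) :
    gradient (fun z => ∑ i ∈ s, f i z) y = ∑ i ∈ s, gradient (f i) y := by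
  rw [gradient, fderiv_fun_sum hf, map_sum]
  rfl

theorem StrongConvexOn.le_inner_gradient_sub_gradient [CompleteSpace E] {F : E → ℝ}
    {μ : ℝ} (hF : StrongConvexOn Set.univ μ F) (hd : Differentiable ℝ F) (a b : E) :
    μ * ‖a - b‖ ^ 2 ≤ ⟪gradient F a - gradient F b, a - b⟫_ℝ := by
  have hq : ∀ y, HasFDerivAt (fun y : E => μ / 2 * ‖y‖ ^ 2) ((μ / 2) • (2 • innerSL ℝ y)) y :=
    fun y => (hasStrictFDerivAt_norm_sq y).hasFDerivAt.const_mul (μ / 2)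
  have hfderiv : ∀ y v, fderiv ℝ (fun y => F y - μ / 2 * ‖y‖ ^ 2) y v =
      ⟪gradient F y, v⟫_ℝ - μ * ⟪y, v⟫_ℝ := fun y v => by
    rw [((hd y).hasFDerivAt.fun_sub (hq y)).fderiv, sub_apply,
      (hd y).hasGradientAt.hasFDerivAt.fderiv]
    simp only [smul_apply, innerSL_apply_apply, toDual_apply_apply, smul_eq_mul]
    ring
  have hmono := (strongConvexOn_iff_convex.mp hF).fderiv_apply_sub_le_fderiv_apply_sub
    (hd.sub fun y => (hq y).differentiableAt) a b
  rw [hfderiv, hfderiv] at hmono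
  rw [← real_inner_self_eq_norm_sq, inner_sub_left, inner_sub_left]
  linarith

theorem StrongConvexOn.norm_sub_smul_gradient_sub_le [CompleteSpace E] {F : E → ℝ}
    {μ L γ : ℝ} {xs : E} (hF : StrongConvexOn Set.univ μ F) (hd : Differentiable ℝ F)
    (hxs : gradient F xs = 0)
    (hlip : ∀ y z, ‖gradient F y - gradient F z‖ ≤ L * ‖y - z‖) (hγ : 0 ≤ γ)
    (hγL : γ * L ^ 2 ≤ 4 / 25 * μ) (hγμ : 23 / 25 * (γ * μ) ≤ 1) (y : E) :
    ‖y - γ • gradient F y - xs‖ ≤ (1 - 23 / 25 * (γ * μ)) * ‖y - xs‖ := by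
  rw [sub_right_comm]
  refine norm_sub_smul_le_of_inner_ge hγ ?_ ?_ hγL hγμ
  · simpa [hxs] using hF.le_inner_gradient_sub_gradient hd y xs
  · simpa [hxs] using hlip y xs

end InnerProductSpace

theorem le_pow_mul_of_delayed_recurrence {a : ℕ → ℝ} {p q ρ : ℝ} {d : ℕ}
    (ha₀ : 0 ≤ a 0) (hp : 0 ≤ p) (hpρ : p ≤ ρ) (hρ : ρ ≤ 1) (hq : q ≤ (ρ - p) * ρ ^ d)
    (hstep : ∀ k M, (∀ l, k - d ≤ l → l ≤ k → a l ≤ M) → a (k + 1) ≤ p * a k + q * M)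
    (k : ℕ) : a k ≤ ρ ^ k * a 0 := by
  induction k using Nat.strong_induction_on with
  | _ k ih =>
  cases k with
  | zero => simp
  | succ k =>
    have hρ₀ : 0 ≤ ρ := hp.trans hpρ
    have hM₀ : 0 ≤ ρ ^ (k - d) * a 0 := mul_nonneg (pow_nonneg hρ₀ _) ha₀
    have hwindow : ∀ l, k - d ≤ l → l ≤ k → a l ≤ ρ ^ (k - d) * a 0 := fun l hl hlk =>
      (ih l (by omega)).trans
        (mul_le_mul_of_nonneg_right (pow_le_pow_of_le_one hρ₀ hρ hl) ha₀)
    have hdelay : ρ ^ d * ρ ^ (k - d) ≤ ρ ^ k := by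
      rw [← pow_add]; exact pow_le_pow_of_le_one hρ₀ hρ (by omega)
    calc a (k + 1) ≤ p * a k + q * (ρ ^ (k - d) * a 0) := hstep k _ hwindow
      _ ≤ p * (ρ ^ k * a 0) + (ρ - p) * ρ ^ d * (ρ ^ (k - d) * a 0) :=
        add_le_add (mul_le_mul_of_nonneg_left (ih k k.lt_succ_self) hp)
          (mul_le_mul_of_nonneg_right hq hM₀)
      _ ≤ p * (ρ ^ k * a 0) + (ρ - p) * (ρ ^ k * a 0) := by
        rw [mul_assoc (ρ - p), ← mul_assoc (ρ ^ d)]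
        gcongr
      _ = ρ ^ (k + 1) * a 0 := by ring

theorem norm_sum_sub_sum_le {ι E : Type*} [SeminormedAddCommGroup E] {s : Finset ι}
    {u v : ι → E} {c : ι → ℝ} {r : ℝ} (h : ∀ i ∈ s, ‖u i - v i‖ ≤ c i * r) :
    ‖∑ i ∈ s, u i - ∑ i ∈ s, v i‖ ≤ (∑ i ∈ s, c i) * r := by
  rw [← sum_sub_distrib, sum_mul]
  exact (norm_sum_le _ _).trans (sum_le_sum h)

section DelayedAggregation

variable {ι E : Type*} [Fintype ι] [NormedAddCommGroup E]
  {G : ι → E → E} {Lf : ι → ℝ} {τ : ι → ℕ → ℕ} {K : ℕ} {x : ℕ → E} {γ M : ℝ} {xs : E}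

theorem norm_sum_apply_delayed_le (hLf : ∀ i, 0 ≤ Lf i)
    (hG : ∀ i y z, ‖G i y - G i z‖ ≤ Lf i * ‖y - z‖) (hxs : ∑ i, G i xs = 0)
    (hτ : ∀ i k, k - K ≤ τ i k ∧ τ i k ≤ k) {j : ℕ}
    (hM : ∀ l, j - K ≤ l → l ≤ j → ‖x l - xs‖ ≤ M) :
    ‖∑ i, G i (x (τ i j))‖ ≤ (∑ i, Lf i) * M := by
  rw [← sub_zero (∑ i, G i (x (τ i j))), ← hxs]
  exact norm_sum_sub_sum_le fun i _ => (hG i _ _).trans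
    (mul_le_mul_of_nonneg_left (hM _ (hτ i j).1 (hτ i j).2) (hLf i))

theorem norm_delayed_iterate_sub_le [NormedSpace ℝ E] (hLf : ∀ i, 0 ≤ Lf i)
    (hG : ∀ i y z, ‖G i y - G i z‖ ≤ Lf i * ‖y - z‖) (hxs : ∑ i, G i xs = 0)
    (hτ : ∀ i k, k - K ≤ τ i k ∧ τ i k ≤ k) (hγ : 0 ≤ γ)
    (hx : ∀ k, x (k + 1) = x k - γ • ∑ i, G i (x (τ i k))) {k : ℕ}
    (hM : ∀ l, k - 2 * K ≤ l → l ≤ k → ‖x l - xs‖ ≤ M) (i : ι) :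
    ‖x (τ i k) - x k‖ ≤ K * (γ * ((∑ i, Lf i) * M)) := by
  have hstep : ∀ j ∈ Ico (τ i k) k,
      dist (x j) (x (j + 1)) ≤ γ * ((∑ i, Lf i) * M) := by
    intro j hj
    have hj := mem_Ico.mp hj
    have hτj := hτ i k
    rw [dist_eq_norm, hx j, sub_sub_cancel, norm_smul, Real.norm_of_nonneg hγ]
    exact mul_le_mul_of_nonneg_left
      (norm_sum_apply_delayed_le hLf hG hxs hτ fun l hl hlj => hM l (by omega) (by omega)) hγ
  have hM₀ : 0 ≤ γ * ((∑ i, Lf i) * M) := mul_nonneg hγ <| mul_nonneg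
    (sum_nonneg fun i _ => hLf i) ((norm_nonneg _).trans (hM k (Nat.sub_le _ _) le_rfl))
  have hcard : ((Ico (τ i k) k).card : ℝ) ≤ K := by
    rw [Nat.card_Ico]; exact_mod_cast (by have := hτ i k; omega)
  calc ‖x (τ i k) - x k‖ = dist (x (τ i k)) (x k) := (dist_eq_norm _ _).symm
    _ ≤ ∑ j ∈ Ico (τ i k) k, dist (x j) (x (j + 1)) := dist_le_Ico_sum_dist x (hτ i k).2
    _ ≤ (Ico (τ i k) k).card * (γ * ((∑ i, Lf i) * M)) := by
      simpa using sum_le_card_nsmul _ _ _ hstep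
    _ ≤ K * (γ * ((∑ i, Lf i) * M)) := mul_le_mul_of_nonneg_right hcard hM₀

theorem norm_iterate_succ_sub_le [NormedSpace ℝ E] (hLf : ∀ i, 0 ≤ Lf i)
    (hG : ∀ i y z, ‖G i y - G i z‖ ≤ Lf i * ‖y - z‖) (hxs : ∑ i, G i xs = 0)
    (hτ : ∀ i k, k - K ≤ τ i k ∧ τ i k ≤ k) (hγ : 0 ≤ γ)
    (hx : ∀ k, x (k + 1) = x k - γ • ∑ i, G i (x (τ i k))) {p : ℝ}
    (hcontr : ∀ y, ‖y - γ • ∑ i, G i y - xs‖ ≤ p * ‖y - xs‖) {k : ℕ}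
    (hM : ∀ l, k - 2 * K ≤ l → l ≤ k → ‖x l - xs‖ ≤ M) :
    ‖x (k + 1) - xs‖ ≤ p * ‖x k - xs‖ + γ ^ 2 * K * (∑ i, Lf i) ^ 2 * M := by
  have herror : ‖∑ i, G i (x (τ i k)) - ∑ i, G i (x k)‖ ≤
      (∑ i, Lf i) * (K * (γ * ((∑ i, Lf i) * M))) :=
    norm_sum_sub_sum_le fun i _ => (hG i _ _).trans <| mul_le_mul_of_nonneg_left
      (norm_delayed_iterate_sub_le hLf hG hxs hτ hγ hx hM i) (hLf i)
  have hsplit : x (k + 1) - xs =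
      (x k - γ • ∑ i, G i (x k) - xs) - γ • (∑ i, G i (x (τ i k)) - ∑ i, G i (x k)) := by
    rw [hx k, smul_sub]; abel
  calc ‖x (k + 1) - xs‖
      ≤ ‖x k - γ • ∑ i, G i (x k) - xs‖ +
          γ * ‖∑ i, G i (x (τ i k)) - ∑ i, G i (x k)‖ := by
        rw [hsplit]
        exact (norm_sub_le _ _).trans_eq (by rw [norm_smul, Real.norm_of_nonneg hγ])
    _ ≤ p * ‖x k - xs‖ + γ * ((∑ i, Lf i) * (K * (γ * ((∑ i, Lf i) * M)))) :=
        add_le_add (hcontr _) (mul_le_mul_of_nonneg_left herror hγ)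
    _ = p * ‖x k - xs‖ + γ ^ 2 * K * (∑ i, Lf i) ^ 2 * M := by ring

end DelayedAggregation

theorem delayed_rate_bounds {K : ℕ} {s a : ℝ} (hK : 1 ≤ K) (hs : 0 ≤ s)
    (hKs : K * s ≤ 1 / 4) (ha : 4 / 25 * s ≤ a) :
    1 - 23 / 25 * a ≤ 1 - 2 / 25 * s / (2 * K + 1) ∧ 1 - 2 / 25 * s / (2 * K + 1) ≤ 1 ∧
      16 / 625 * s ≤ (23 / 25 * a - 2 / 25 * s / (2 * K + 1)) *
        (1 - 2 / 25 * s / (2 * K + 1)) ^ (2 * K) := by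
  set c := 2 / 25 * s / (2 * K + 1)
  have hK' : (1 : ℝ) ≤ K := by exact_mod_cast hK
  have hc₀ : 0 ≤ c := by positivity
  have hc : c * (2 * K + 1) = 2 / 25 * s := div_mul_cancel₀ _ (by positivity)
  have hc3 : c ≤ 2 / 75 * s := by nlinarith
  have h2Kc : 2 * K * c ≤ 1 / 75 := by
    nlinarith [mul_nonneg (by positivity : (0:ℝ) ≤ K) hc₀]
  have hbern : 74 / 75 ≤ (1 - c) ^ (2 * K) := by
    have := one_add_mul_le_pow (a := -c) (by nlinarith) (2 * K)
    push_cast at this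
    rw [← sub_eq_add_neg] at this
    linarith
  refine ⟨by linarith, by linarith, ?_⟩
  nlinarith [mul_le_mul_of_nonneg_left hbern (by linarith : (0:ℝ) ≤ 23 / 25 * a - c)]

theorem iag_stepsize_bounds {γ μ L : ℝ} {K : ℕ} (hμ : 0 < μ) (hμL : μ ≤ L)
    (hK : 1 ≤ K) (hγ : γ = 4 / 25 * μ / (K * L * (μ + L))) :
    γ * L ^ 2 ≤ 4 / 25 * μ ∧ 23 / 25 * (γ * μ) ≤ 1 := by
  have hK' : (1 : ℝ) ≤ K := by exact_mod_cast hK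
  have hL : 0 < L := hμ.trans_le hμL
  have hKL : L * (μ + L) ≤ K * L * (μ + L) := by
    rw [mul_assoc]; exact le_mul_of_one_le_left (by positivity) hK'
  subst hγ
  constructor
  · have : L ^ 2 ≤ K * L * (μ + L) := by nlinarith
    rw [div_mul_eq_mul_div, div_le_iff₀ (by positivity)]
    nlinarith [mul_le_mul_of_nonneg_left this hμ.le]
  · rw [← mul_assoc, mul_div_assoc', div_mul_eq_mul_div, div_le_iff₀ (by positivity)]
    nlinarith

theorem iag_rate_bounds {γ μ L ρ : ℝ} {K : ℕ} (hμ : 0 < μ) (hμL : μ ≤ L) (hK : 1 ≤ K)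
    (hγ : γ = 4 / 25 * μ / (K * L * (μ + L)))
    (hρ : ρ = 1 - 2 / 25 / (K * (2 * K + 1)) / (L / μ + 1) ^ 2) :
    1 - 23 / 25 * (γ * μ) ≤ ρ ∧ ρ ≤ 1 ∧
      γ ^ 2 * K * L ^ 2 ≤ (ρ - (1 - 23 / 25 * (γ * μ))) * ρ ^ (2 * K) := by
  have hK' : (1 : ℝ) ≤ K := by exact_mod_cast hK
  have hL : 0 < L := hμ.trans_le hμL
  set s : ℝ := 1 / (K * (L / μ + 1) ^ 2) with hs_def
  have hs : 0 ≤ s := by positivity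
  have hKs : K * s ≤ 1 / 4 := by
    have : 1 ≤ L / μ := (one_le_div hμ).mpr hμL
    have : 4 ≤ (L / μ + 1) ^ 2 := by nlinarith
    rw [mul_one_div, div_le_div_iff₀ (by positivity) (by norm_num)]
    nlinarith
  have hρs : ρ = 1 - 2 / 25 * s / (2 * K + 1) := by rw [hρ, hs_def]; field_simp
  have hγs : γ ^ 2 * K * L ^ 2 = 16 / 625 * s := by
    rw [hγ, hs_def]; field_simp; ring
  have ha : 4 / 25 * s ≤ γ * μ := by
    have hsγ : 4 / 25 * s = γ * μ * (L / (μ + L)) := by rw [hγ, hs_def]; field_simp; ring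
    rw [hsγ]
    refine mul_le_of_le_one_right (by rw [hγ]; positivity) ?_
    rw [div_le_one (by positivity)]
    linarith
  obtain ⟨h₁, h₂, h₃⟩ := delayed_rate_bounds hK hs hKs ha
  rw [hρs, hγs]
  exact ⟨h₁, h₂, by convert h₃ using 2; ring⟩

theorem iag_explicit_rate_dist_general
    (n m : ℕ)
    (f : Fin m → EuclideanSpace ℝ (Fin n) → ℝ)
    (Li : Fin m → ℝ) (hLi : ∀ i, 0 ≤ Li i)
    (L : ℝ) (hL : L = ∑ i, Li i)
    (hdiff : ∀ i, Differentiable ℝ (f i))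
    (hlip : ∀ i y z, ‖gradient (f i) y - gradient (f i) z‖ ≤ Li i * ‖y - z‖)
    (K : ℕ) (hK : 1 ≤ K)
    (τ : Fin m → ℕ → ℕ)
    (hτ : ∀ i k, k - K ≤ τ i k ∧ τ i k ≤ k)
    (F : EuclideanSpace ℝ (Fin n) → ℝ) (hF : F = fun y => ∑ i, f i y)
    (x g : ℕ → EuclideanSpace ℝ (Fin n))
    (hg : ∀ k, g k = ∑ i, gradient (f i) (x (τ i k)))
    (γ : ℝ) (hγ : 0 < γ)
    (hx : ∀ k, x (k + 1) = x k - γ • g k)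
    (μ : ℝ) (hμ : 0 < μ) (hμL : μ ≤ L)
    (hsc : ConvexOn ℝ Set.univ (fun y => F y - μ / 2 * ‖y‖ ^ 2))
    (xs : EuclideanSpace ℝ (Fin n))
    (hgxs : gradient F xs = 0)
    (hγstar : γ = (4 / 25) * μ / (K * L * (μ + L))) :
    ∀ k, ‖x k - xs‖ ≤
      (1 - ((2 / 25) / (K * (2 * K + 1))) / (L / μ + 1) ^ 2) ^ k * ‖x 0 - xs‖ := by
  have hgrad : ∀ y, gradient F y = ∑ i, gradient (f i) y := fun y => by
    rw [hF]; exact gradient_fun_sum fun i _ => hdiff i y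
  have hFd : Differentiable ℝ F := hF ▸ Differentiable.fun_sum fun i _ => hdiff i
  have hlipF : ∀ y z, ‖gradient F y - gradient F z‖ ≤ L * ‖y - z‖ := fun y z => by
    simpa only [hgrad, hL] using norm_sum_sub_sum_le fun i (_ : i ∈ univ) => hlip i y z
  obtain ⟨hγL, hγμ⟩ := iag_stepsize_bounds hμ hμL hK hγstar
  obtain ⟨hpρ, hρ1, hq⟩ := iag_rate_bounds hμ hμL hK hγstar rfl
  have hcontr : ∀ y,
      ‖y - γ • ∑ i, gradient (f i) y - xs‖ ≤ (1 - 23 / 25 * (γ * μ)) * ‖y - xs‖ := fun y =>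
    hgrad y ▸ (strongConvexOn_iff_convex.mpr hsc).norm_sub_smul_gradient_sub_le hFd hgxs hlipF
      hγ.le hγL hγμ y
  intro k
  refine le_pow_mul_of_delayed_recurrence (a := fun k => ‖x k - xs‖) (norm_nonneg _)
    (by linarith) hpρ hρ1 hq (fun k M hM => ?_) k
  have := norm_iterate_succ_sub_le hLi hlip ((hgrad xs).symm.trans hgxs) hτ hγ.le
    (fun k => hg k ▸ hx k) hcontr hM
  rwa [← hL] at this

/-- Explicit linear rate of the IAG method with the stepsize `γ* = (4/25)μ/(KL(μ+L))`:
the distance to the optimum contracts with rate `1 - c_K/(Q+1)²`. -/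
theorem iag_explicit_rate_dist
    (n m : ℕ) (hm : 1 ≤ m)
    (f : Fin m → EuclideanSpace ℝ (Fin n) → ℝ)
    (Li : Fin m → ℝ) (hLi : ∀ i, 0 ≤ Li i)
    (L : ℝ) (hL : L = ∑ i, Li i)
    (hconv : ∀ i, ConvexOn ℝ Set.univ (f i))
    (hdiff : ∀ i, Differentiable ℝ (f i))
    (hlip : ∀ i y z, ‖gradient (f i) y - gradient (f i) z‖ ≤ Li i * ‖y - z‖)
    (K : ℕ) (hK : 1 ≤ K)
    (τ : Fin m → ℕ → ℕ)
    (hτ : ∀ i k, k - K ≤ τ i k ∧ τ i k ≤ k)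
    (hτ0 : ∀ i, τ i 0 = 0)
    (F : EuclideanSpace ℝ (Fin n) → ℝ) (hF : F = fun y => ∑ i, f i y)
    (x g e : ℕ → EuclideanSpace ℝ (Fin n))
    (hg : ∀ k, g k = ∑ i, gradient (f i) (x (τ i k)))
    (he : ∀ k, e k = g k - gradient F (x k))
    (γ : ℝ) (hγ : 0 < γ)
    (hx : ∀ k, x (k + 1) = x k - γ • g k)
    (μ : ℝ) (hμ : 0 < μ) (hμL : μ ≤ L)
    (hsc : ConvexOn ℝ Set.univ (fun y => F y - μ / 2 * ‖y‖ ^ 2))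
    (xs : EuclideanSpace ℝ (Fin n))
    (hmin : ∀ y, F xs ≤ F y) (hgxs : gradient F xs = 0)
    (hγstar : γ = (4 / 25) * μ / (K * L * (μ + L))) :
    ∀ k, ‖x k - xs‖ ≤
      (1 - ((2 / 25) / (K * (2 * K + 1))) / (L / μ + 1) ^ 2) ^ k * ‖x 0 - xs‖ :=
  iag_explicit_rate_dist_general n m f Li hLi L hL hdiff hlip K hK τ hτ F hF x g hg γ hγ hx μ hμ hμL
    hsc xs hgxs hγstar
end

section
/- Suppose the stepsize equals γ* = (4/25)·μ / (K·L·(μ + L)). Then for every k ≥ 0 the IAG iterates satisfy f(x^k) − f(x*) ≤ (L/2) · (1 − c_K/(Q + 1)²)^{2k} · ‖x^0 − x*‖², where c_K = (2/25) / (K·(2K + 1)) and Q = L/μ. -/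
/-!
The gradient `∇F = ∑ ∇fᵢ` is `L`-Lipschitz and `μ`-strongly monotone, so an exact gradient step
contracts the distance to `x*` by the factor `1 - γμ + γ²L²/2`. The IAG error `eᵏ` is at most `L`
times the displacement `‖xᵏ - x^{τᵢᵏ}‖`, i.e. at most `KγL²` times the largest distance
`‖xˡ - x*‖` over the window `k - 2K ≤ l ≤ k`. The distances `rₖ` thus obey the delayed recursion
`r_{k+1} ≤ a rₖ + b max_{k-2K ≤ l ≤ k} rₗ`, which forces `rₖ ≤ ρᵏ r₀` as soon as
`a + b ρ^{-2K} ≤ ρ`; for `γ = γ*` this holds with `ρ = 1 - c_K/(Q+1)²`, because `ρ^{2K} ≥ 1/2`.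
The descent lemma `F x - F x* ≤ (L/2)‖x - x*‖²` turns distances into function values.
-/

open Set
open scoped RealInnerProductSpace

section Gradient

variable {H : Type*} [NormedAddCommGroup H] [InnerProductSpace ℝ H] [CompleteSpace H]

theorem HasGradientAt.fun_sum {ι : Type*} {s : Finset ι} {f : ι → H → ℝ} {f' : ι → H} {x : H}
    (h : ∀ i ∈ s, HasGradientAt (f i) (f' i) x) :
    HasGradientAt (fun y => ∑ i ∈ s, f i y) (∑ i ∈ s, f' i) x := by
  rw [hasGradientAt_iff_hasFDerivAt, map_sum]
  exact HasFDerivAt.fun_sum fun i hi => hasGradientAt_iff_hasFDerivAt.mp (h i hi)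

theorem HasGradientAt.sub {f g : H → ℝ} {f' g' x : H}
    (hf : HasGradientAt f f' x) (hg : HasGradientAt g g' x) :
    HasGradientAt (fun y => f y - g y) (f' - g') x := by
  rw [hasGradientAt_iff_hasFDerivAt, map_sub]
  exact (hasGradientAt_iff_hasFDerivAt.mp hf).sub (hasGradientAt_iff_hasFDerivAt.mp hg)

theorem hasGradientAt_const_mul_norm_sq (c : ℝ) (x : H) :
    HasGradientAt (fun y : H => c * ‖y‖ ^ 2) ((2 * c) • x) x := by
  rw [hasGradientAt_iff_hasFDerivAt]
  refine ((hasStrictFDerivAt_norm_sq x).hasFDerivAt.const_mul c).congr_fderiv ?_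
  ext v
  simp only [smul_apply, coe_innerSL_apply, nsmul_eq_mul, Nat.cast_ofNat,
    smul_eq_mul, map_smul, InnerProductSpace.toDual_apply_apply]
  ring

theorem HasGradientAt.hasDerivAt_comp_add_smul {f : H → ℝ} {f' x d : H} {t : ℝ}
    (hf : HasGradientAt f f' (x + t • d)) :
    HasDerivAt (fun s : ℝ => f (x + s • d)) ⟪f', d⟫ t := by
  have hline : HasDerivAt (fun s : ℝ => x + s • d) d t := by
    simpa using ((hasDerivAt_id t).smul_const d).const_add x
  simpa [InnerProductSpace.toDual_apply_apply, Function.comp_def] using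
    (hasGradientAt_iff_hasFDerivAt.mp hf).comp_hasDerivAt t hline

variable {f : H → ℝ} {G : H → H}

theorem ConvexOn.inner_gradient_sub_nonneg (hf : ConvexOn ℝ univ f)
    (hG : ∀ x, HasGradientAt f (G x) x) (x y : H) : 0 ≤ ⟪G x - G y, x - y⟫ := by
  set φ := fun s : ℝ => f (y + s • (x - y))
  have hφ : ∀ t : ℝ, HasDerivAt φ ⟪G (y + t • (x - y)), x - y⟫ t :=
    fun t => (hG _).hasDerivAt_comp_add_smul
  have hφc : ConvexOn ℝ univ φ := by
    have h := hf.comp_affineMap (AffineMap.lineMap y x)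
    have : f ∘ AffineMap.lineMap y x = φ := by
      ext t
      simp [φ, AffineMap.lineMap_apply, add_comm]
    simpa [this] using h
  have h01 := hφc.monotoneOn_deriv (fun t _ => (hφ t).differentiableAt)
    (mem_univ 0) (mem_univ 1) zero_le_one
  simp only [(hφ _).deriv, zero_smul, add_zero, one_smul, add_sub_cancel] at h01
  rw [inner_sub_left]
  linarith

theorem inner_gradient_sub_ge_of_convexOn_sub_norm_sq {μ : ℝ}
    (hf : ConvexOn ℝ univ (fun y => f y - μ / 2 * ‖y‖ ^ 2))
    (hG : ∀ x, HasGradientAt f (G x) x) (x y : H) :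
    μ * ‖x - y‖ ^ 2 ≤ ⟪G x - G y, x - y⟫ := by
  have hG' : ∀ x, HasGradientAt (fun y => f y - μ / 2 * ‖y‖ ^ 2) (G x - μ • x) x := fun x => by
    simpa [mul_div_cancel₀] using (hG x).sub (hasGradientAt_const_mul_norm_sq (μ / 2) x)
  have h := hf.inner_gradient_sub_nonneg hG' x y
  rw [sub_sub_sub_comm, ← smul_sub, inner_sub_left, real_inner_smul_left,
    real_inner_self_eq_norm_sq] at h
  linarith

theorem le_add_inner_add_norm_sq_of_lipschitz_gradient {L : ℝ}
    (hG : ∀ x, HasGradientAt f (G x) x) (hL : ∀ x y, ‖G x - G y‖ ≤ L * ‖x - y‖) (x y : H) :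
    f y ≤ f x + ⟪G x, y - x⟫ + L / 2 * ‖y - x‖ ^ 2 := by
  set d := y - x
  have hφ : ∀ t : ℝ, HasDerivAt (fun s : ℝ => f (x + s • d)) ⟪G (x + t • d), d⟫ t :=
    fun t => (hG _).hasDerivAt_comp_add_smul
  have hB : ∀ t : ℝ, HasDerivAt (fun s : ℝ => f x + s * ⟪G x, d⟫ + L / 2 * s ^ 2 * ‖d‖ ^ 2)
      (⟪G x, d⟫ + L * t * ‖d‖ ^ 2) t := fun t => by
    refine ((((hasDerivAt_id' t).mul_const ⟪G x, d⟫).const_add (f x)).add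
      (((hasDerivAt_pow 2 t).const_mul (L / 2)).mul_const (‖d‖ ^ 2))).congr_deriv ?_
    ring
  have key := image_le_of_deriv_right_le_deriv_boundary (a := 0) (b := 1)
    (fun t _ => (hφ t).continuousAt.continuousWithinAt) (fun t _ => (hφ t).hasDerivWithinAt)
    (by simp) (fun t _ => (hB t).continuousAt.continuousWithinAt)
    (fun t _ => (hB t).hasDerivWithinAt) ?_ (right_mem_Icc.2 zero_le_one)
  · simpa [d] using key
  rintro t ⟨ht0, -⟩
  have hCS : ⟪G (x + t • d) - G x, d⟫ ≤ L * t * ‖d‖ ^ 2 := calc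
    _ ≤ ‖G (x + t • d) - G x‖ * ‖d‖ := real_inner_le_norm _ _
    _ ≤ L * ‖t • d‖ * ‖d‖ := by
      gcongr
      simpa using hL (x + t • d) x
    _ = L * t * ‖d‖ ^ 2 := by rw [norm_smul, Real.norm_of_nonneg ht0]; ring
  rw [inner_sub_left] at hCS
  linarith

end Gradient

theorem norm_sum_sub_le_of_lipschitz {ι E F : Type*} [Fintype ι] [SeminormedAddCommGroup E]
    [SeminormedAddCommGroup F] {G : ι → E → F} {Li : ι → ℝ} (hLi : ∀ i, 0 ≤ Li i)
    (hG : ∀ i y z, ‖G i y - G i z‖ ≤ Li i * ‖y - z‖) {y : ι → E} {z : E} {M : ℝ}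
    (hM : ∀ i, ‖y i - z‖ ≤ M) :
    ‖∑ i, (G i (y i) - G i z)‖ ≤ (∑ i, Li i) * M := by
  rw [Finset.sum_mul]
  refine (norm_sum_le _ _).trans (Finset.sum_le_sum fun i _ => ?_)
  exact (hG i _ _).trans (mul_le_mul_of_nonneg_left (hM i) (hLi i))

theorem norm_sub_le_of_norm_step_le {E : Type*} [SeminormedAddCommGroup E] [Module ℝ E]
    [NormSMulClass ℝ E] {x g : ℕ → E} {γ C : ℝ} {K k t : ℕ}
    (hx : ∀ j, x (j + 1) = x j - γ • g j) (hγ : 0 ≤ γ)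
    (hC : 0 ≤ C) (hg : ∀ j, k - K ≤ j → j < k → ‖g j‖ ≤ C) (ht : k - K ≤ t) (htk : t ≤ k) :
    ‖x t - x k‖ ≤ K * (γ * C) := by
  have hstep : ∀ j ∈ Finset.Ico t k, dist (x j) (x (j + 1)) ≤ γ * C := fun j hj => by
    rw [Finset.mem_Ico] at hj
    rw [dist_eq_norm, hx, sub_sub_cancel, norm_smul, Real.norm_of_nonneg hγ]
    exact mul_le_mul_of_nonneg_left (hg j (by omega) hj.2) hγ
  calc ‖x t - x k‖ = dist (x t) (x k) := (dist_eq_norm _ _).symm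
    _ ≤ ∑ j ∈ Finset.Ico t k, dist (x j) (x (j + 1)) := dist_le_Ico_sum_dist x htk
    _ ≤ (k - t : ℕ) * (γ * C) := by simpa using Finset.sum_le_sum hstep
    _ ≤ K * (γ * C) := by gcongr; omega

theorem norm_sub_smul_le_of_inner_ge_s11 {H : Type*} [NormedAddCommGroup H] [InnerProductSpace ℝ H]
    {u v : H} {γ μ L : ℝ} (hγ : 0 ≤ γ) (hμ : μ * ‖u‖ ^ 2 ≤ ⟪v, u⟫) (hL : ‖v‖ ≤ L * ‖u‖)
    (hγμ : γ * μ ≤ 1) :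
    ‖u - γ • v‖ ≤ (1 - γ * μ + γ ^ 2 * L ^ 2 / 2) * ‖u‖ := by
  have hv : ‖v‖ ^ 2 ≤ L ^ 2 * ‖u‖ ^ 2 := by
    rw [← mul_pow]; exact pow_le_pow_left₀ (norm_nonneg v) hL 2
  have hsq : ‖u - γ • v‖ ^ 2 ≤ ((1 - γ * μ + γ ^ 2 * L ^ 2 / 2) * ‖u‖) ^ 2 := by
    rw [norm_sub_sq_real, real_inner_smul_right, norm_smul, Real.norm_of_nonneg hγ,
      real_inner_comm]
    nlinarith [mul_le_mul_of_nonneg_left hμ hγ, mul_le_mul_of_nonneg_left hv (sq_nonneg γ),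
      mul_nonneg (sq_nonneg (γ * μ - γ ^ 2 * L ^ 2 / 2)) (sq_nonneg ‖u‖)]
  exact le_of_pow_le_pow_left₀ two_ne_zero (by nlinarith [norm_nonneg u, sq_nonneg (γ * L)]) hsq

/-- A discrete Halanay inequality. -/
theorem le_pow_mul_of_delayed_recursion {r : ℕ → ℝ} {a b ρ : ℝ} {D : ℕ} (hr : 0 ≤ r 0)
    (ha : 0 ≤ a) (hb : 0 ≤ b) (hρ : 0 < ρ) (hρ1 : ρ ≤ 1) (habρ : a + b / ρ ^ D ≤ ρ)
    (hrec : ∀ k M, (∀ l, k - D ≤ l → l ≤ k → r l ≤ M) → r (k + 1) ≤ a * r k + b * M)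
    (k : ℕ) : r k ≤ ρ ^ k * r 0 := by
  induction k using Nat.strong_induction_on with
  | _ k ih =>
    cases k with
    | zero => simp
    | succ k =>
      have hwindow : ∀ l, k - D ≤ l → l ≤ k → r l ≤ ρ ^ (k - D) * r 0 := fun l hl hlk =>
        (ih l (by omega)).trans
          (mul_le_mul_of_nonneg_right (pow_le_pow_of_le_one hρ.le hρ1 hl) hr)
      have hdelay : ρ ^ (k - D) ≤ ρ ^ k / ρ ^ D := by
        rw [le_div_iff₀ (by positivity), ← pow_add]
        exact pow_le_pow_of_le_one hρ.le hρ1 (by omega)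
      calc r (k + 1) ≤ a * r k + b * (ρ ^ (k - D) * r 0) := hrec k _ hwindow
        _ ≤ a * (ρ ^ k * r 0) + b * (ρ ^ k / ρ ^ D * r 0) := by
          gcongr
          exact ih k (by omega)
        _ = (a + b / ρ ^ D) * (ρ ^ k * r 0) := by ring
        _ ≤ ρ * (ρ ^ k * r 0) := by gcongr
        _ = ρ ^ (k + 1) * r 0 := by ring

namespace IAG

/-- The paper's `c_K / (Q + 1) ^ 2`; the iterates contract by the factor `1 - rateGap K μ L`. -/
noncomputable def rateGap (K : ℕ) (μ L : ℝ) : ℝ := (2 / 25) / (K * (2 * K + 1)) / (L / μ + 1) ^ 2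

noncomputable def stepsize (K : ℕ) (μ L : ℝ) : ℝ := (4 / 25) * μ / (K * L * (μ + L))

variable {K : ℕ} {μ L : ℝ}

theorem rateGap_pos (hμ : 0 < μ) (hμL : μ ≤ L) (hK : 1 ≤ K) : 0 < rateGap K μ L := by
  have : 0 < L := hμ.trans_le hμL
  have : (0 : ℝ) < K := by exact_mod_cast hK
  unfold rateGap; positivity

theorem two_mul_mul_rateGap_le (hμ : 0 < μ) (hμL : μ ≤ L) (hK : 1 ≤ K) :
    2 * K * rateGap K μ L ≤ 1 / 4 := by
  have hK' : (1 : ℝ) ≤ K := by exact_mod_cast hK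
  have hQ : 1 ≤ (L / μ + 1) ^ 2 := by
    have : 0 ≤ L / μ := div_nonneg (hμ.le.trans hμL) hμ.le
    nlinarith
  unfold rateGap
  rw [div_div, mul_div_assoc', div_le_iff₀ (by positivity)]
  nlinarith [mul_le_mul_of_nonneg_left hQ (by positivity : (0 : ℝ) ≤ K * (2 * K + 1))]

theorem rateGap_le (hμ : 0 < μ) (hμL : μ ≤ L) (hK : 1 ≤ K) : rateGap K μ L ≤ 1 / 8 := by
  have hK' : (1 : ℝ) ≤ K := by exact_mod_cast hK
  nlinarith [two_mul_mul_rateGap_le hμ hμL hK, rateGap_pos hμ hμL hK]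

theorem one_half_le_one_sub_rateGap_pow (hμ : 0 < μ) (hμL : μ ≤ L) (hK : 1 ≤ K) :
    1 / 2 ≤ (1 - rateGap K μ L) ^ (2 * K) := by
  have hδ := rateGap_le hμ hμL hK
  have := one_add_mul_le_pow (a := -rateGap K μ L) (by linarith) (2 * K)
  push_cast [← sub_eq_add_neg] at this
  linarith [two_mul_mul_rateGap_le hμ hμL hK]

theorem stepsize_mul_le_one (hμ : 0 < μ) (hμL : μ ≤ L) (hK : 1 ≤ K) :
    stepsize K μ L * μ ≤ 1 := by
  have hL : 0 < L := hμ.trans_le hμL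
  have hK' : (1 : ℝ) ≤ K := by exact_mod_cast hK
  unfold stepsize
  rw [div_mul_eq_mul_div, div_le_one (by positivity)]
  nlinarith [mul_le_mul hμL hμL hμ.le hL.le,
    mul_le_mul_of_nonneg_right hK' (by positivity : 0 ≤ L * (μ + L))]

theorem rateGap_add_le (hμ : 0 < μ) (hμL : μ ≤ L) (hK : 1 ≤ K) :
    rateGap K μ L + 2 * K * (stepsize K μ L * L) ^ 2
      ≤ stepsize K μ L * μ - stepsize K μ L ^ 2 * L ^ 2 / 2 := by
  have hL : 0 < L := hμ.trans_le hμL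
  have hK' : (1 : ℝ) ≤ K := by exact_mod_cast hK
  unfold rateGap stepsize
  field_simp
  have h1 : 0 ≤ (μ + L) ^ 2 * ((2 * K + 1) * 50 * K * μ) := by positivity
  have h2 : 0 ≤ (μ + L) ^ 2 * (L * (68 * K ^ 2 + K - 4)) := by
    have : (0 : ℝ) ≤ 68 * K ^ 2 + K - 4 := by nlinarith
    positivity
  nlinarith

theorem delayed_recursion_coeff_le (hμ : 0 < μ) (hμL : μ ≤ L) (hK : 1 ≤ K) :
    1 - stepsize K μ L * μ + stepsize K μ L ^ 2 * L ^ 2 / 2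
      + K * (stepsize K μ L * L) ^ 2 / (1 - rateGap K μ L) ^ (2 * K) ≤ 1 - rateGap K μ L := by
  have hpow := one_half_le_one_sub_rateGap_pow hμ hμL hK
  have hdelay : K * (stepsize K μ L * L) ^ 2 / (1 - rateGap K μ L) ^ (2 * K)
      ≤ 2 * K * (stepsize K μ L * L) ^ 2 := by
    rw [div_le_iff₀ (by linarith)]
    nlinarith [(by positivity : (0 : ℝ) ≤ K * (stepsize K μ L * L) ^ 2)]
  linarith [rateGap_add_le hμ hμL hK]

section Step

variable {H ι : Type*} [NormedAddCommGroup H] [InnerProductSpace ℝ H] [Fintype ι]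
  {G : ι → H → H} {Li : ι → ℝ} {τ : ι → ℕ → ℕ} {x g : ℕ → H} {γ : ℝ} {xs : H}

theorem norm_iterate_succ_sub_le (hLi : ∀ i, 0 ≤ Li i) (hL : L = ∑ i, Li i)
    (hG : ∀ i y z, ‖G i y - G i z‖ ≤ Li i * ‖y - z‖)
    (hτ : ∀ i k, k - K ≤ τ i k ∧ τ i k ≤ k) (hg : ∀ k, g k = ∑ i, G i (x (τ i k)))
    (hx : ∀ k, x (k + 1) = x k - γ • g k) (hγ : 0 ≤ γ) (hxs : ∑ i, G i xs = 0)
    (hμ : ∀ p, μ * ‖p - xs‖ ^ 2 ≤ ⟪∑ i, G i p, p - xs⟫) (hγμ : γ * μ ≤ 1)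
    {k : ℕ} {M : ℝ} (hM : ∀ l, k - 2 * K ≤ l → l ≤ k → ‖x l - xs‖ ≤ M) :
    ‖x (k + 1) - xs‖ ≤ (1 - γ * μ + γ ^ 2 * L ^ 2 / 2) * ‖x k - xs‖ + K * (γ * L) ^ 2 * M := by
  have hL0 : 0 ≤ L := hL ▸ Finset.sum_nonneg fun i _ => hLi i
  have hM0 : 0 ≤ M := (norm_nonneg _).trans (hM k (by omega) le_rfl)
  have hsum_sub : ∀ y : ι → H, ∑ i, G i (y i) = ∑ i, (G i (y i) - G i xs) := fun y => by
    rw [Finset.sum_sub_distrib, hxs, sub_zero]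
  have hgrad_le : ∀ p, ‖∑ i, G i p‖ ≤ L * ‖p - xs‖ := fun p => by
    rw [hsum_sub fun _ => p, hL]; exact norm_sum_sub_le_of_lipschitz hLi hG fun _ => le_rfl
  have hg_le : ∀ j, k - K ≤ j → j < k → ‖g j‖ ≤ L * M := fun j hj hjk => by
    rw [hg, hsum_sub fun i => x (τ i j), hL]
    exact norm_sum_sub_le_of_lipschitz hLi hG fun i =>
      hM _ (by have := (hτ i j).1; omega) (by have := (hτ i j).2; omega)
  have herr : ‖g k - ∑ i, G i (x k)‖ ≤ L * (K * (γ * (L * M))) := by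
    rw [hg, ← Finset.sum_sub_distrib, hL]
    refine norm_sum_sub_le_of_lipschitz hLi hG fun i => ?_
    rw [← hL]
    exact norm_sub_le_of_norm_step_le hx hγ (mul_nonneg hL0 hM0) hg_le (hτ i k).1 (hτ i k).2
  have hstep : ‖x k - xs - γ • ∑ i, G i (x k)‖ ≤ (1 - γ * μ + γ ^ 2 * L ^ 2 / 2) * ‖x k - xs‖ :=
    norm_sub_smul_le_of_inner_ge_s11 hγ (hμ _) (hgrad_le _) hγμ
  have hsplit : x (k + 1) - xs = (x k - xs - γ • ∑ i, G i (x k)) - γ • (g k - ∑ i, G i (x k)) := by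
    rw [hx, smul_sub]; abel
  calc ‖x (k + 1) - xs‖
      ≤ ‖x k - xs - γ • ∑ i, G i (x k)‖ + γ * ‖g k - ∑ i, G i (x k)‖ := by
        rw [hsplit, ← norm_smul_of_nonneg hγ]; exact norm_sub_le _ _
    _ ≤ (1 - γ * μ + γ ^ 2 * L ^ 2 / 2) * ‖x k - xs‖ + γ * (L * (K * (γ * (L * M)))) := by
        gcongr
    _ = (1 - γ * μ + γ ^ 2 * L ^ 2 / 2) * ‖x k - xs‖ + K * (γ * L) ^ 2 * M := by ring


end Step

end IAG

theorem iag_explicit_rate_cost_general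
    (n m : ℕ)
    (f : Fin m → EuclideanSpace ℝ (Fin n) → ℝ)
    (Li : Fin m → ℝ) (hLi : ∀ i, 0 ≤ Li i)
    (L : ℝ) (hL : L = ∑ i, Li i)
    (hdiff : ∀ i, Differentiable ℝ (f i))
    (hlip : ∀ i y z, ‖gradient (f i) y - gradient (f i) z‖ ≤ Li i * ‖y - z‖)
    (K : ℕ) (hK : 1 ≤ K)
    (τ : Fin m → ℕ → ℕ)
    (hτ : ∀ i k, k - K ≤ τ i k ∧ τ i k ≤ k)
    (F : EuclideanSpace ℝ (Fin n) → ℝ) (hF : F = fun y => ∑ i, f i y)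
    (x g : ℕ → EuclideanSpace ℝ (Fin n))
    (hg : ∀ k, g k = ∑ i, gradient (f i) (x (τ i k)))
    (γ : ℝ) (hγ : 0 < γ)
    (hx : ∀ k, x (k + 1) = x k - γ • g k)
    (μ : ℝ) (hμ : 0 < μ) (hμL : μ ≤ L)
    (hsc : ConvexOn ℝ Set.univ (fun y => F y - μ / 2 * ‖y‖ ^ 2))
    (xs : EuclideanSpace ℝ (Fin n))
    (hgxs : gradient F xs = 0)
    (hγstar : γ = (4 / 25) * μ / (K * L * (μ + L))) :
    ∀ k, F (x k) - F xs ≤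
      (L / 2) * (1 - ((2 / 25) / (K * (2 * K + 1))) / (L / μ + 1) ^ 2) ^ (2 * k)
        * ‖x 0 - xs‖ ^ 2 := by
  intro k
  have hgrad : ∀ p, HasGradientAt F (∑ i, gradient (f i) p) p := fun p => by
    rw [hF]; exact HasGradientAt.fun_sum fun i _ => (hdiff i p).hasGradientAt
  have hxs : ∑ i, gradient (f i) xs = 0 := (hgrad xs).gradient.symm.trans hgxs
  have hLip : ∀ p q, ‖∑ i, gradient (f i) p - ∑ i, gradient (f i) q‖ ≤ L * ‖p - q‖ :=
    fun p q => by
      rw [← Finset.sum_sub_distrib, hL]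
      exact norm_sum_sub_le_of_lipschitz hLi hlip fun _ => le_rfl
  have hsmono : ∀ p, μ * ‖p - xs‖ ^ 2 ≤ ⟪∑ i, gradient (f i) p, p - xs⟫ := fun p => by
    simpa [hxs] using inner_gradient_sub_ge_of_convexOn_sub_norm_sq hsc hgrad p xs
  obtain rfl : γ = IAG.stepsize K μ L := hγstar
  have hγμ := IAG.stepsize_mul_le_one hμ hμL hK
  have hdist : ‖x k - xs‖ ≤ (1 - IAG.rateGap K μ L) ^ k * ‖x 0 - xs‖ :=
    le_pow_mul_of_delayed_recursion (r := fun k => ‖x k - xs‖) (norm_nonneg _)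
      (by nlinarith) (by positivity) (by linarith [IAG.rateGap_le hμ hμL hK])
      (by linarith [IAG.rateGap_pos hμ hμL hK]) (IAG.delayed_recursion_coeff_le hμ hμL hK)
      (fun k M hM => IAG.norm_iterate_succ_sub_le hLi hL hlip hτ hg hx hγ.le hxs hsmono hγμ hM) k
  have hdescent := le_add_inner_add_norm_sq_of_lipschitz_gradient hgrad hLip xs (x k)
  rw [hxs, inner_zero_left, add_zero] at hdescent
  calc F (x k) - F xs ≤ L / 2 * ‖x k - xs‖ ^ 2 := by linarith
    _ ≤ L / 2 * ((1 - IAG.rateGap K μ L) ^ k * ‖x 0 - xs‖) ^ 2 := by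
      gcongr; linarith
    _ = _ := by rw [IAG.rateGap]; ring

/-- Explicit linear rate of the IAG method with the stepsize `γ* = (4/25)μ/(KL(μ+L))`
in terms of function values. -/
theorem iag_explicit_rate_cost
    (n m : ℕ) (hm : 1 ≤ m)
    (f : Fin m → EuclideanSpace ℝ (Fin n) → ℝ)
    (Li : Fin m → ℝ) (hLi : ∀ i, 0 ≤ Li i)
    (L : ℝ) (hL : L = ∑ i, Li i)
    (hconv : ∀ i, ConvexOn ℝ Set.univ (f i))
    (hdiff : ∀ i, Differentiable ℝ (f i))
    (hlip : ∀ i y z, ‖gradient (f i) y - gradient (f i) z‖ ≤ Li i * ‖y - z‖)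
    (K : ℕ) (hK : 1 ≤ K)
    (τ : Fin m → ℕ → ℕ)
    (hτ : ∀ i k, k - K ≤ τ i k ∧ τ i k ≤ k)
    (hτ0 : ∀ i, τ i 0 = 0)
    (F : EuclideanSpace ℝ (Fin n) → ℝ) (hF : F = fun y => ∑ i, f i y)
    (x g e : ℕ → EuclideanSpace ℝ (Fin n))
    (hg : ∀ k, g k = ∑ i, gradient (f i) (x (τ i k)))
    (he : ∀ k, e k = g k - gradient F (x k))
    (γ : ℝ) (hγ : 0 < γ)
    (hx : ∀ k, x (k + 1) = x k - γ • g k)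
    (μ : ℝ) (hμ : 0 < μ) (hμL : μ ≤ L)
    (hsc : ConvexOn ℝ Set.univ (fun y => F y - μ / 2 * ‖y‖ ^ 2))
    (xs : EuclideanSpace ℝ (Fin n))
    (hmin : ∀ y, F xs ≤ F y) (hgxs : gradient F xs = 0)
    (hγstar : γ = (4 / 25) * μ / (K * L * (μ + L))) :
    ∀ k, F (x k) - F xs ≤
      (L / 2) * (1 - ((2 / 25) / (K * (2 * K + 1))) / (L / μ + 1) ^ 2) ^ (2 * k)
        * ‖x 0 - xs‖ ^ 2 :=
  iag_explicit_rate_cost_general n m f Li hLi L hL hdiff hlip K hK τ hτ F hF x g hg γ hγ hx μ hμ hμL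
    hsc xs hgxs hγstar
end
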